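/- arXiv:2305.04042 — 4 statements merged into one kernel-verified Lean document; each statement's English description precedes it below -/
import Mathlib

section
/- Let V be a thin category (a preordered set viewed as a category) with finite limits. A morphism (X_i)_{i∈I} ≤ Y in Fam(V) (i.e., the assertion X_i ≤ Y for all i) is an epimorphism if and only if I is non-empty. -/
open CategoryTheory CategoryTheory.Limits

universe v u

/-- An object of `Fam V`: a set-indexed family of objects of `V`
(the free coproduct completion of `V`). -/
structure Fam (V : Type u) [Category.{v} V] : Type (max (u + 1) v) where
  ι : Type
  obj : ι → V

namespace Fam

variable {V : Type u} [Category.{v} V]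

/-- A morphism of families: an index function together with componentwise morphisms. -/
structure Hom (X Y : Fam V) where
  idx : X.ι → Y.ι
  map : ∀ i, X.obj i ⟶ Y.obj (idx i)

instance : Category (Fam V) where
  Hom X Y := Fam.Hom X Y
  id X := ⟨fun i => i, fun i => 𝟙 _⟩
  comp f g := ⟨fun i => g.idx (f.idx i), fun i => f.map i ≫ g.map (f.idx i)⟩
  id_comp f := by cases f; simp only [Category.id_comp]
  comp_id f := by cases f; simp only [Category.comp_id]
  assoc f g h := by cases f; cases g; cases h; simp only [Category.assoc]

/-- The singleton family on an object of `V`. -/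
def single (Y : V) : Fam V := ⟨PUnit, fun _ => Y⟩

/-- The family with index set `I` and components `X i`. -/
def mk' (I : Type) (X : I → V) : Fam V := ⟨I, X⟩

/-- The morphism to a singleton family determined by componentwise morphisms. -/
def toSingle {I : Type} (X : I → V) (Y : V) (φ : ∀ i, X i ⟶ Y) :
    mk' I X ⟶ single Y :=
  ⟨fun _ => PUnit.unit, φ⟩

end Fam

/-- The morphism `(X_i)_{i ∈ I} ≤ Y` in `Fam V` for a thin category (preorder) `V`. -/
def Fam.leHom {V : Type} [Preorder V] {I : Type} (X : I → V) (Y : V) (h : ∀ i, X i ≤ Y) :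
    Fam.mk' I X ⟶ Fam.single Y :=
  Fam.toSingle X Y fun i => homOfLE (h i)

/-- For a thin finitely complete `V` (a meet-semilattice with top), the
morphism `(X_i)_{i ∈ I} ≤ Y` in `Fam V` is an epimorphism iff `I` is non-empty. -/
theorem fam_thin_epi_iff_nonempty {V : Type} [SemilatticeInf V] [OrderTop V]
    {I : Type} (X : I → V) (Y : V) (h : ∀ i, X i ≤ Y) :
    Epi (Fam.leHom X Y h) ↔ Nonempty I := by
  constructor
  · intro hepi
    by_contra hI
    rw [not_nonempty_iff] at hI
    -- counterexample: two maps into a two-index family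
    let Z : Fam V := ⟨Bool, fun _ => (⊤ : V)⟩
    let g : Fam.single Y ⟶ Z := ⟨fun _ => true, fun _ => homOfLE le_top⟩
    let g' : Fam.single Y ⟶ Z := ⟨fun _ => false, fun _ => homOfLE le_top⟩
    have heq : Fam.leHom X Y h ≫ g = Fam.leHom X Y h ≫ g' := by
      show Fam.Hom.mk _ _ = Fam.Hom.mk _ _
      congr 1
      all_goals first
        | (funext i; exact (hI.false i).elim)
        | (apply Function.hfunext rfl; intros i _ _; exact (hI.false i).elim)
    have := hepi.left_cancellation g g' heq
    have : true = false := congrFun (congrArg Fam.Hom.idx this) PUnit.unit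
    simp at this
  · rintro ⟨i⟩
    constructor
    intro Z g g' heq
    have hidx : g.idx = g'.idx := by
      funext u
      cases u
      have := congrFun (congrArg Fam.Hom.idx heq) i
      exact this
    obtain ⟨gi, gm⟩ := g
    obtain ⟨gi', gm'⟩ := g'
    obtain rfl : gi = gi' := hidx
    congr 1
    funext u
    exact Subsingleton.elim _ _
end

section
/- If V is a Heyting semilattice (a bounded meet-semilattice in which every a ∈ V has a right adjoint to a ∧ −, i.e., an implication), then every regular epimorphism in Fam(V) is stable under pullback. -/
open CategoryTheory CategoryTheory.Limits

universe v u

section Aux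

open Fam

variable {V : Type} [Preorder V]

lemma Fam.hom_ext' {X Y : Fam V} {u v : X ⟶ Y} (h : Fam.Hom.idx u = Fam.Hom.idx v) : u = v := by
  obtain ⟨ui, um⟩ := u
  obtain ⟨vi, vm⟩ := v
  dsimp at h
  subst h
  congr 1
  funext i
  exact Subsingleton.elim _ _

lemma Fam.comp_idx {X Y Z : Fam V} (u : X ⟶ Y) (v : Y ⟶ Z) (i : X.ι) :
    Fam.Hom.idx (u ≫ v) i = v.idx (u.idx i) := rfl

lemma Fam.le_of_map {X Y : Fam V} (u : X ⟶ Y) (i : X.ι) : X.obj i ≤ Y.obj (u.idx i) :=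
  leOfHom (u.map i)

/-- In `Fam V` with `V` a meet-semilattice with top, a regular epi has a surjective
index map. -/
lemma Fam.regularEpi_idx_surjective {V : Type} [SemilatticeInf V] [OrderTop V]
    {A B : Fam V} (f : A ⟶ B) (hf : RegularEpi f) :
    Function.Surjective f.idx := by
  intro j
  by_contra hj
  push_neg at hj
  -- test object with index set Prop
  let Z : Fam V := Fam.mk' Prop (fun _ => (⊤ : V))
  let u₁ : B ⟶ Z := ⟨fun j' => (∃ a, f.idx a = j'), fun _ => homOfLE le_top⟩
  let u₂ : B ⟶ Z := ⟨fun _ => True, fun _ => homOfLE le_top⟩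
  have h12 : u₁ = u₂ := by
    haveI : Epi f := @RegularEpi.epi _ _ _ _ f hf
    apply (cancel_epi f).mp
    apply Fam.hom_ext'
    funext a
    show (∃ a', f.idx a' = f.idx a) = True
    simp only [eq_iff_iff, iff_true]
    exact ⟨a, rfl⟩
  have h2 : (∃ a, f.idx a = j) = True := congrFun (congrArg Fam.Hom.idx h12) j
  obtain ⟨a, ha⟩ := of_eq_true h2
  exact hj a ha

/-- The least-upper-bound property of a regular epi in `Fam V`. -/
lemma Fam.regularEpi_lub {V : Type} [SemilatticeInf V] [OrderTop V]
    {A B : Fam V} (f : A ⟶ B) (hf : RegularEpi f) (j : B.ι) (b : V)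
    (hub : ∀ a, f.idx a = j → A.obj a ≤ b) : B.obj j ≤ b := by
  classical
  obtain ⟨a₀, ha₀⟩ := Fam.regularEpi_idx_surjective f hf j
  let T : Fam V := Fam.mk' B.ι (fun j' => if j' = j then b else B.obj j')
  let k : A ⟶ T := ⟨f.idx, fun a => homOfLE (by
    by_cases h : f.idx a = j
    · rw [show T.obj (f.idx a) = b from if_pos h]
      exact hub a h
    · rw [show T.obj (f.idx a) = B.obj (f.idx a) from if_neg h]
      exact Fam.le_of_map f a)⟩
  have hw : hf.left ≫ k = hf.right ≫ k := by
    apply Fam.hom_ext'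
    funext i
    show f.idx (hf.left.idx i) = f.idx (hf.right.idx i)
    exact congrFun (congrArg Fam.Hom.idx hf.w) i
  let m : B ⟶ T := Cofork.IsColimit.desc hf.isColimit k hw
  have hfm : f ≫ m = k := Cofork.IsColimit.π_desc' hf.isColimit k hw
  have hmidx : m.idx j = j := by
    have h1 : m.idx (f.idx a₀) = f.idx a₀ := congrFun (congrArg Fam.Hom.idx hfm) a₀
    rwa [ha₀] at h1
  have := Fam.le_of_map m j
  rw [hmidx] at this
  rwa [show T.obj j = b from if_pos rfl] at this

/-- A morphism in `Fam V` whose index map is surjective and whose codomain components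
are least upper bounds of the fibers is a regular epi. -/
noncomputable def Fam.regularEpiOfLub {V : Type} [SemilatticeInf V]
    {X Y : Fam V} (h : X ⟶ Y)
    (hsurj : ∀ j, ∃ i, h.idx i = j)
    (hlub : ∀ j x, (∀ i, h.idx i = j → X.obj i ≤ x) → Y.obj j ≤ x) :
    RegularEpi h := by
  refine
    { W := Fam.mk' {pq : X.ι × X.ι // h.idx pq.1 = h.idx pq.2}
        (fun pq => X.obj pq.1.1 ⊓ X.obj pq.1.2)
      left := ⟨fun pq => pq.1.1, fun pq => homOfLE inf_le_left⟩
      right := ⟨fun pq => pq.1.2, fun pq => homOfLE inf_le_right⟩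
      w := ?_
      isColimit := ?_ }
  · apply Fam.hom_ext'
    funext pq
    exact pq.2
  · -- the fibers of `h.idx` are "connected" directly
    have key : ∀ {T : Fam V} (π : X ⟶ T),
        ((⟨fun pq => pq.1.1, fun pq => homOfLE inf_le_left⟩ :
           Fam.mk' {pq : X.ι × X.ι // h.idx pq.1 = h.idx pq.2}
             (fun pq => X.obj pq.1.1 ⊓ X.obj pq.1.2) ⟶ X) ≫ π =
         (⟨fun pq => pq.1.2, fun pq => homOfLE inf_le_right⟩ :
           Fam.mk' {pq : X.ι × X.ι // h.idx pq.1 = h.idx pq.2}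
             (fun pq => X.obj pq.1.1 ⊓ X.obj pq.1.2) ⟶ X) ≫ π) →
        ∀ i i', h.idx i = h.idx i' → π.idx i = π.idx i' := by
      intro T π hπ i i' hii
      exact congrFun (congrArg Fam.Hom.idx hπ) ⟨(i, i'), hii⟩
    apply Cofork.IsColimit.mk _
      (fun s => (⟨fun j => s.π.idx (Classical.choose (hsurj j)), fun j => homOfLE (by
        apply hlub j
        intro i hi
        have hc := Classical.choose_spec (hsurj j)
        have : s.π.idx i = s.π.idx (Classical.choose (hsurj j)) :=
          key s.π s.condition i _ (by rw [hi, hc])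
        show X.obj i ≤ s.pt.obj (s.π.idx (Classical.choose (hsurj j)))
        rw [← this]
        exact Fam.le_of_map s.π i)⟩ : Fam.Hom Y s.pt))
    · intro s
      apply Fam.hom_ext'
      funext i
      show s.π.idx (Classical.choose (hsurj (h.idx i))) = s.π.idx i
      exact key s.π s.condition _ i (Classical.choose_spec (hsurj (h.idx i)))
    · intro s m hm
      apply Fam.hom_ext'
      funext j
      show m.idx j = s.π.idx (Classical.choose (hsurj j))
      have hc := Classical.choose_spec (hsurj j)
      have h3 : m.idx (h.idx (Classical.choose (hsurj j))) =
          s.π.idx (Classical.choose (hsurj j)) :=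
        congrFun (congrArg Fam.Hom.idx hm) (Classical.choose (hsurj j))
      rwa [hc] at h3

end Aux

/-- If `V` is a Heyting semilattice — a meet-semilattice with top in which
every `a ⊓ -` has a right adjoint (an implication) — then every regular epimorphism in
`Fam V` is stable under pullback: any pullback of a regular epimorphism is a regular
epimorphism. -/
theorem fam_heyting_regularEpi_stable {V : Type} [SemilatticeInf V] [OrderTop V]
    (himp : V → V → V) (adj : ∀ a b c : V, a ⊓ b ≤ c ↔ b ≤ himp a c)
    {A B C P : Fam V} (f : A ⟶ B) (hf : RegularEpi f)
    (g : C ⟶ B) (fst : P ⟶ C) (snd : P ⟶ A)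
    (hpb : IsPullback fst snd g f) : Nonempty (RegularEpi fst) := by
  have hsurjf : Function.Surjective f.idx := Fam.regularEpi_idx_surjective f hf
  -- for every `c : C.ι` and `a` in the matching fiber, there is a point of `P`
  -- over `(c, a)` whose component contains `C.obj c ⊓ A.obj a`.
  have hpoint : ∀ (c : C.ι) (a : A.ι), f.idx a = g.idx c →
      ∃ p : P.ι, fst.idx p = c ∧ C.obj c ⊓ A.obj a ≤ P.obj p := by
    intro c a e
    let pt : Fam V := Fam.single (C.obj c ⊓ A.obj a)
    let p₁ : pt ⟶ C := ⟨fun _ => c, fun _ => homOfLE inf_le_left⟩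
    let p₂ : pt ⟶ A := ⟨fun _ => a, fun _ => homOfLE inf_le_right⟩
    have cond : p₁ ≫ g = p₂ ≫ f := by
      apply Fam.hom_ext'
      funext _
      exact e.symm
    refine ⟨(hpb.lift p₁ p₂ cond).idx PUnit.unit, ?_, ?_⟩
    · exact congrFun (congrArg Fam.Hom.idx (hpb.lift_fst p₁ p₂ cond)) PUnit.unit
    · exact Fam.le_of_map (hpb.lift p₁ p₂ cond) PUnit.unit
  refine ⟨Fam.regularEpiOfLub fst ?_ ?_⟩
  · intro c
    obtain ⟨a, ha⟩ := hsurjf (g.idx c)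
    obtain ⟨p, hp, -⟩ := hpoint c a ha
    exact ⟨p, hp⟩
  · intro c x hx
    have hfib : ∀ a, f.idx a = g.idx c → A.obj a ≤ himp (C.obj c) x := by
      intro a ha
      apply (adj _ _ _).mp
      obtain ⟨p, hp, hle⟩ := hpoint c a ha
      exact le_trans hle (hx p hp)
    have hB : B.obj (g.idx c) ≤ himp (C.obj c) x :=
      Fam.regularEpi_lub f hf (g.idx c) _ hfib
    have hC : C.obj c ≤ himp (C.obj c) x :=
      le_trans (Fam.le_of_map g c) hB
    have := (adj (C.obj c) (C.obj c) x).mpr hC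
    exact le_trans (le_inf le_rfl le_rfl) this
end

section
/- Let V be a frame and let (X_i)_{i∈I} be a nonempty family of elements below Y with ⋁_{i∈I} X_i = Y. Define a descent datum for this cover to be a family (W_i)_{i∈I} with W_i ≤ X_i for all i, satisfying the compatibility (gluing) condition X_j ∧ W_i ≤ W_j for all i,j ∈ I. Then the assignment Z ↦ (X_i ∧ Z)_{i∈I} is an order-isomorphism from {Z : Z ≤ Y} to the poset of descent data, with inverse (W_i)_i ↦ ⋁_i W_i. -/
/-- Descent data for a cover `(X_i)_{i ∈ I}` of `Y` in a frame: a family `(W_i)` with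
`W_i ≤ X_i` satisfying the gluing condition `X_j ⊓ W_i ≤ W_j` for all `i, j`. -/
abbrev DescentDatum {V : Type*} [Order.Frame V] {I : Type*} (X : I → V) : Type _ :=
  {W : I → V // (∀ i, W i ≤ X i) ∧ ∀ i j, X j ⊓ W i ≤ W j}

/-- Let `V` be a frame and `(X_i)_{i ∈ I}` a nonempty family of elements
below `Y` with `⋁_i X_i = Y`.  Then `Z ↦ (X_i ⊓ Z)_i` is an order-isomorphism from
`{Z // Z ≤ Y}` to the poset of descent data (ordered componentwise), with inverse
`(W_i)_i ↦ ⋁_i W_i`. -/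
theorem frame_descent_orderIso {V : Type*} [Order.Frame V] {I : Type*} [Nonempty I]
    (X : I → V) (Y : V) (hX : ∀ i, X i ≤ Y) (hY : (⨆ i, X i) = Y) :
    ∃ e : {Z : V // Z ≤ Y} ≃o DescentDatum X,
      (∀ Z : {Z : V // Z ≤ Y}, (e Z).val = fun i => X i ⊓ Z.val) ∧
      ∀ W : DescentDatum X, (e.symm W).val = ⨆ i, W.val i := by
  have key : ∀ Z : V, Z ≤ Y → (⨆ i, X i ⊓ Z) = Z := by
    intro Z hZ
    rw [← iSup_inf_eq, hY, inf_eq_right.mpr hZ]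
  refine ⟨{ toFun := fun Z => ⟨fun i => X i ⊓ Z.val,
              fun i => inf_le_left, fun i j =>
                inf_le_inf_left _ inf_le_right⟩
            invFun := fun W => ⟨⨆ i, W.val i,
              iSup_le fun i => (W.prop.1 i).trans (hX i)⟩
            left_inv := fun Z => Subtype.ext (key Z.val Z.prop)
            right_inv := fun W => by
              refine Subtype.ext (funext fun i => le_antisymm ?_ ?_)
              · show X i ⊓ (⨆ j, W.val j) ≤ W.val i
                rw [inf_iSup_eq]
                exact iSup_le fun j => W.prop.2 j i
              · exact le_inf (W.prop.1 i) (le_iSup (fun j => W.val j) i)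
            map_rel_iff' := by
              intro Z Z'
              constructor
              · intro h
                have : (⨆ i, X i ⊓ Z.val) ≤ ⨆ i, X i ⊓ Z'.val :=
                  iSup_mono fun i => h i
                rwa [key _ Z.prop, key _ Z'.prop] at this
              · intro h i
                exact inf_le_inf_left _ h }, fun Z => rfl, fun W => rfl⟩
end

section
/- Let V be a frame. For a nonempty family (X_i)_{i∈I} with X_i ≤ Y for all i, the following are equivalent: (1) ⋁_{i∈I} X_i = Y; (2) for every Z ≤ Y, Z = ⋁_{i∈I} (Z ∧ X_i); (3) the morphism (X_i)_{i∈I} ≤ Y in Fam(V) is a stable regular epimorphism. -/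
open CategoryTheory CategoryTheory.Limits

universe v u

/-!
A morphism of families `f : (A_a) ⟶ (B_b)` over a complete lattice is the coequalizer of its
kernel pair as soon as its index map is surjective and every `B_b` lies below the join of the
`A_a` over it; conversely, the coequalizer of `leHom X Y h` factors through `single (⨆ i, X i)`,
forcing `Y ≤ ⨆ i, X i`. Pullbacks of `leHom X Y h` along `C ⟶ single Y` are given by the meets
`C_c ⊓ X_i`, so in a frame the distributive law `C_c = ⨆ i, C_c ⊓ X_i` makes every such
pullback a cover again.
-/

namespace Fam

variable {V : Type}

section Preorder

variable [Preorder V]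

lemma hom_ext_of_idx {A B : Fam V} {f g : A ⟶ B} (h : Hom.idx f = Hom.idx g) : f = g := by
  change Hom A B at f g
  obtain ⟨fi, fm⟩ := f
  obtain ⟨gi, gm⟩ := g
  obtain rfl : fi = gi := h
  congr 1
  exact Subsingleton.elim _ _

instance {A : Fam V} {Y : V} : Subsingleton (A ⟶ single Y) :=
  ⟨fun _ _ => hom_ext_of_idx (funext fun _ => rfl)⟩

end Preorder

section SemilatticeInf

variable [SemilatticeInf V] (C : Fam V) {I : Type} (X : I → V)

def pullbackObj : Fam V :=
  ⟨C.ι × I, fun p => C.obj p.1 ⊓ X p.2⟩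

def pullbackFst : pullbackObj C X ⟶ C :=
  ⟨Prod.fst, fun _ => homOfLE inf_le_left⟩

def pullbackSnd : pullbackObj C X ⟶ mk' I X :=
  ⟨Prod.snd, fun _ => homOfLE inf_le_right⟩

lemma isPullback_pullbackFst_pullbackSnd {Y : V} (h : ∀ i, X i ≤ Y) (g : C ⟶ single Y) :
    IsPullback (pullbackFst C X) (pullbackSnd C X) g (leHom X Y h) := by
  refine IsPullback.of_isLimit (c := PullbackCone.mk _ _ (Subsingleton.elim _ _)) <|
    PullbackCone.IsLimit.mk _
      (fun s => ⟨fun p => (Hom.idx s.fst p, Hom.idx s.snd p),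
        fun p => homOfLE (le_inf (leOfHom (Hom.map s.fst p)) (leOfHom (Hom.map s.snd p)))⟩)
      (fun _ => hom_ext_of_idx rfl) (fun _ => hom_ext_of_idx rfl)
      (fun _ m hm₁ hm₂ => hom_ext_of_idx (funext fun p => Prod.ext
        (congrFun (congrArg Hom.idx hm₁) p) (congrFun (congrArg Hom.idx hm₂) p)))

end SemilatticeInf

section CompleteLattice

variable [CompleteLattice V] {A B : Fam V}

def kernelPair (f : A ⟶ B) : Fam V :=
  ⟨{p : A.ι × A.ι // Hom.idx f p.1 = Hom.idx f p.2}, fun p => A.obj p.1.1 ⊓ A.obj p.1.2⟩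

def kernelPairFst (f : A ⟶ B) : kernelPair f ⟶ A :=
  ⟨fun p => p.1.1, fun _ => homOfLE inf_le_left⟩

def kernelPairSnd (f : A ⟶ B) : kernelPair f ⟶ A :=
  ⟨fun p => p.1.2, fun _ => homOfLE inf_le_right⟩

lemma kernelPair_condition (f : A ⟶ B) : kernelPairFst f ≫ f = kernelPairSnd f ≫ f :=
  hom_ext_of_idx (funext fun p => p.2)

lemma idx_π_eq_of_idx_eq {f : A ⟶ B} (s : Cofork (kernelPairFst f) (kernelPairSnd f))
    {a a' : A.ι} (h : Hom.idx f a = Hom.idx f a') : Hom.idx s.π a = Hom.idx s.π a' :=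
  congrFun (congrArg Hom.idx s.condition) ⟨(a, a'), h⟩

noncomputable def isColimitKernelPairCofork (f : A ⟶ B)
    (hsurj : Function.Surjective (Hom.idx f))
    (hcov : ∀ b, B.obj b ≤ ⨆ a : {a // Hom.idx f a = b}, A.obj a.1) :
    IsColimit (Cofork.ofπ f (kernelPair_condition f)) := by
  choose σ hσ using hsurj
  refine Cofork.IsColimit.mk _
    (fun s => ⟨fun b => Hom.idx s.π (σ b), fun b => homOfLE <| (hcov b).trans <|
      iSup_le fun a => (leOfHom (Hom.map s.π a.1)).trans_eq <|
        congrArg s.pt.obj (idx_π_eq_of_idx_eq s (a.2.trans (hσ b).symm))⟩)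
    (fun s => hom_ext_of_idx (funext fun a => idx_π_eq_of_idx_eq s (hσ _)))
    (fun s m hm => hom_ext_of_idx (funext fun b => ?_))
  calc Hom.idx m b = Hom.idx m (Hom.idx f (σ b)) := by rw [hσ b]
    _ = Hom.idx s.π (σ b) := congrFun (congrArg Hom.idx hm) (σ b)

noncomputable def regularEpiOfCover (f : A ⟶ B) (hsurj : Function.Surjective (Hom.idx f))
    (hcov : ∀ b, B.obj b ≤ ⨆ a : {a // Hom.idx f a = b}, A.obj a.1) : RegularEpi f :=
  Cofork.IsColimit.regularEpi (isColimitKernelPairCofork f hsurj hcov)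

noncomputable def regularEpiLeHom {I : Type} [Nonempty I] {X : I → V} {Y : V}
    (h : ∀ i, X i ≤ Y) (hs : ⨆ i, X i = Y) : RegularEpi (leHom X Y h) :=
  regularEpiOfCover _ (fun _ => ⟨Classical.arbitrary I, rfl⟩) fun _ =>
    hs.ge.trans <| iSup_le fun i => le_iSup_of_le ⟨i, rfl⟩ le_rfl

lemma iSup_eq_of_regularEpi {I : Type} {X : I → V} {Y : V} {h : ∀ i, X i ≤ Y}
    (hr : RegularEpi (leHom X Y h)) : ⨆ i, X i = Y := by
  refine le_antisymm (iSup_le h) ?_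
  let d : single Y ⟶ single (⨆ i, X i) :=
    Cofork.IsColimit.desc hr.isColimit (toSingle X _ fun i => homOfLE (le_iSup X i))
      (Subsingleton.elim _ _)
  exact leOfHom (Hom.map d PUnit.unit)

noncomputable def regularEpiOfIsPullback {I : Type} [Nonempty I] {X : I → V} {Y : V}
    (h : ∀ i, X i ≤ Y) (hcov : ∀ Z ≤ Y, Z ≤ ⨆ i, Z ⊓ X i) {P C : Fam V}
    {g : C ⟶ single Y} {fst : P ⟶ C} {snd : P ⟶ mk' I X}
    (hP : IsPullback fst snd g (leHom X Y h)) : RegularEpi fst := by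
  have hP' := isPullback_pullbackFst_pullbackSnd C X h g
  refine RegularEpi.ofArrowIso (Arrow.isoMk (hP'.isoIsPullback _ _ hP) (Iso.refl _) ?_) <|
    regularEpiOfCover (pullbackFst C X) (fun c => ⟨(c, Classical.arbitrary I), rfl⟩) fun c =>
      (hcov _ (leOfHom (Hom.map g c))).trans <|
        iSup_le fun i => le_iSup_of_le ⟨(c, i), rfl⟩ le_rfl
  exact (hP'.isoIsPullback_hom_fst _ _ hP).trans (Category.comp_id _).symm

end CompleteLattice

end Fam

theorem iSup_eq_iff_forall_le_eq_iSup_inf {V : Type} [Order.Frame V] {I : Type} {X : I → V}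
    {Y : V} (h : ∀ i, X i ≤ Y) : ⨆ i, X i = Y ↔ ∀ Z ≤ Y, Z = ⨆ i, Z ⊓ X i := by
  refine ⟨fun hs Z hZ => ?_, fun H => ?_⟩
  · rw [← inf_iSup_eq, hs, inf_eq_left.mpr hZ]
  · simpa only [inf_eq_right.mpr (h _)] using (H Y le_rfl).symm

/-- Let `V` be a frame.  For a nonempty family `(X_i)_{i ∈ I}` with
`X_i ≤ Y` for all `i`, the following are equivalent:
(1) `⋁_i X_i = Y`;
(2) for every `Z ≤ Y`, `Z = ⋁_i (Z ⊓ X_i)`;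
(3) the morphism `(X_i)_{i ∈ I} ≤ Y` in `Fam V` is a stable regular epimorphism. -/
theorem frame_fam_stable_regularEpi_tfae {V : Type} [Order.Frame V]
    {I : Type} [Nonempty I] (X : I → V) (Y : V) (h : ∀ i, X i ≤ Y) :
    ((⨆ i, X i) = Y ↔ ∀ Z : V, Z ≤ Y → Z = ⨆ i, Z ⊓ X i) ∧
    ((⨆ i, X i) = Y ↔
      (Nonempty (RegularEpi (Fam.leHom X Y h)) ∧
        ∀ {P C : Fam V} (g : C ⟶ Fam.single Y) (fst : P ⟶ C) (snd : P ⟶ Fam.mk' I X),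
          IsPullback fst snd g (Fam.leHom X Y h) → Nonempty (RegularEpi fst))) := by
  have h12 := iSup_eq_iff_forall_le_eq_iSup_inf h
  refine ⟨h12, fun hs => ⟨⟨Fam.regularEpiLeHom h hs⟩, fun _ _ _ hP => ?_⟩,
    fun ⟨⟨hr⟩, _⟩ => Fam.iSup_eq_of_regularEpi hr⟩
  exact ⟨Fam.regularEpiOfIsPullback h (fun Z hZ => (h12.mp hs Z hZ).le) hP⟩
end
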